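/- arXiv:2410.17700 — 2 statements merged into one kernel-verified Lean document; each statement's English description precedes it below -/
import Mathlib

section
/- Stick-breaking weights sum to one almost surely: let α > 0 and let (v_k)_{k∈ℕ} be an i.i.d. sequence of Beta(1, α)-distributed random variables on a probability space. Define π_k = v_k · ∏_{j=1}^{k−1} (1 − v_j). Then almost surely ∑_{k=1}^{∞} π_k = 1; equivalently, ∏_{j=1}^{K} (1 − v_j) → 0 almost surely as K → ∞. Hence the stick-breaking (GEM) construction almost surely defines a probability vector. -/
/-
With `c := 𝔼[1 − v] < 1` (a `Beta(1, α)` variable is a.s. positive), independence gives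
`𝔼[∏_{j<K} (1 − v_j)] = c^K`, so `∑_K ∏_{j<K} (1 − v_j)` has finite expectation, hence is
a.s. finite, and its terms tend to `0` a.s. The stick-breaking weights telescope:
`∑_{k<K} π_k = 1 − ∏_{j<K} (1 − v_j)`.
-/

open MeasureTheory Filter

/-- The Beta(a, b) distribution on `[0,1]`: the measure with density
`x ↦ x^(a−1) (1−x)^(b−1) / B(a,b)` w.r.t. Lebesgue measure, where
`B(a,b) = Γ(a)Γ(b)/Γ(a+b)`. -/
noncomputable def betaMeasure (a b : ℝ) : Measure ℝ :=
  volume.withDensity fun x =>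
    ENNReal.ofReal (if x ∈ Set.Icc (0 : ℝ) 1 then
      x ^ (a - 1) * (1 - x) ^ (b - 1) / (Real.Gamma a * Real.Gamma b / Real.Gamma (a + b))
    else 0)

open Finset
open scoped ENNReal Topology

section StickBreaking

variable {R : Type*} [CommRing R]

theorem sum_range_stickBreaking (v : ℕ → R) (K : ℕ) :
    ∑ k ∈ range K, v k * ∏ j ∈ range k, (1 - v j) = 1 - ∏ j ∈ range K, (1 - v j) := by
  induction K with
  | zero => simp
  | succ K ih => rw [sum_range_succ, prod_range_succ, ih]; ring

theorem hasSum_stickBreaking {v : ℕ → ℝ} (hv : ∀ k, v k ∈ Set.Icc 0 1)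
    (h : Tendsto (fun K => ∏ j ∈ range K, (1 - v j)) atTop (𝓝 0)) :
    HasSum (fun k => v k * ∏ j ∈ range k, (1 - v j)) 1 := by
  have hweight_nonneg (k : ℕ) : 0 ≤ v k * ∏ j ∈ range k, (1 - v j) :=
    mul_nonneg (hv k).1 (prod_nonneg fun j _ => sub_nonneg.2 (hv j).2)
  rw [hasSum_iff_tendsto_nat_of_nonneg hweight_nonneg]
  simpa only [sum_range_stickBreaking, sub_zero] using tendsto_const_nhds.sub h

theorem tendsto_prod_range_one_sub_of_ofReal {v : ℕ → ℝ} (hv : ∀ k, v k ≤ 1)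
    (h : Tendsto (fun K => ∏ j ∈ range K, ENNReal.ofReal (1 - v j)) atTop (𝓝 0)) :
    Tendsto (fun K => ∏ j ∈ range K, (1 - v j)) atTop (𝓝 0) := by
  refine ENNReal.toReal_zero ▸ ((ENNReal.tendsto_toReal ENNReal.zero_ne_top).comp h).congr
    fun K => ?_
  rw [Function.comp_apply, ENNReal.toReal_prod]
  exact prod_congr rfl fun j _ => ENNReal.toReal_ofReal (sub_nonneg.2 (hv j))

end StickBreaking

section BetaMeasure

theorem betaMeasure_absolutelyContinuous (a b : ℝ) : betaMeasure a b ≪ volume :=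
  withDensity_absolutelyContinuous _ _

theorem betaMeasure_compl_Icc (a b : ℝ) : betaMeasure a b (Set.Icc 0 1)ᶜ = 0 := by
  rw [betaMeasure, withDensity_apply _ measurableSet_Icc.compl]
  refine (setLIntegral_congr_fun measurableSet_Icc.compl fun x hx => ?_).trans lintegral_zero
  rw [if_neg hx, ENNReal.ofReal_zero]

theorem ae_betaMeasure_mem_Ioc (a b : ℝ) : ∀ᵐ x ∂betaMeasure a b, x ∈ Set.Ioc 0 1 := by
  have h_Icc : ∀ᵐ x ∂betaMeasure a b, x ∈ Set.Icc (0 : ℝ) 1 :=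
    ae_iff.2 (betaMeasure_compl_Icc a b)
  have h_ne : ∀ᵐ x ∂betaMeasure a b, x ≠ 0 :=
    compl_mem_ae_iff.2 (betaMeasure_absolutelyContinuous a b Real.volume_singleton)
  filter_upwards [h_Icc, h_ne] with x hx hx0
  exact ⟨lt_of_le_of_ne hx.1 (Ne.symm hx0), hx.2⟩

end BetaMeasure

section Probability

open ProbabilityTheory

variable {Ω : Type*} [MeasurableSpace Ω] {μ : Measure Ω}

theorem ae_tendsto_zero_of_tsum_lintegral_ne_top {f : ℕ → Ω → ℝ≥0∞}
    (hf : ∀ n, AEMeasurable (f n) μ) (h : ∑' n, ∫⁻ ω, f n ω ∂μ ≠ ∞) :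
    ∀ᵐ ω ∂μ, Tendsto (fun n => f n ω) atTop (𝓝 0) := by
  rw [← lintegral_tsum hf] at h
  filter_upwards [ae_lt_top' (AEMeasurable.tsum hf) h] with ω hω
  exact ENNReal.tendsto_atTop_zero_of_tsum_ne_top hω.ne

theorem ae_tendsto_prod_range_zero_of_iIndepFun {g : ℕ → Ω → ℝ≥0∞}
    (hg : ∀ k, Measurable (g k)) (hindep : iIndepFun g μ) {c : ℝ≥0∞} (hc : c < 1)
    (hint : ∀ k, ∫⁻ ω, g k ω ∂μ ≤ c) :
    ∀ᵐ ω ∂μ, Tendsto (fun K => ∏ j ∈ range K, g j ω) atTop (𝓝 0) := by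
  refine ae_tendsto_zero_of_tsum_lintegral_ne_top
    (fun K => range K |>.aemeasurable_fun_prod fun j _ => (hg j).aemeasurable) (ne_top_of_le_ne_top
      (ENNReal.inv_ne_top.2 (tsub_pos_of_lt hc).ne') (le_of_le_of_eq ?_ (ENNReal.tsum_geometric c)))
  refine ENNReal.tsum_le_tsum fun K => ?_
  rw [lintegral_prod_eq_prod_lintegral_of_indepFun _ _ hindep hg]
  simpa using prod_le_pow_card (range K) _ c fun j _ => hint j

theorem lintegral_ofReal_one_sub_lt_one {μ : Measure ℝ} [IsProbabilityMeasure μ]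
    (hpos : ∀ᵐ x ∂μ, 0 < x) : ∫⁻ x, ENNReal.ofReal (1 - x) ∂μ < 1 := by
  have hlt : ∀ᵐ x ∂μ, ENNReal.ofReal (1 - x) < 1 := by
    filter_upwards [hpos] with x hx
    exact ENNReal.ofReal_lt_one.2 (by linarith)
  have hfin : ∫⁻ x, ENNReal.ofReal (1 - x) ∂μ ≠ ∞ :=
    ne_top_of_le_ne_top (by simp) (lintegral_mono_ae (hlt.mono fun _ hx => hx.le))
  simpa using lintegral_strict_mono (IsProbabilityMeasure.ne_zero μ) aemeasurable_const hfin hlt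

end Probability

theorem stmt_12_general (α : ℝ)
    (Ω : Type*) [MeasurableSpace Ω] (ℙ : Measure Ω) [IsProbabilityMeasure ℙ]
    (v : ℕ → Ω → ℝ) (hmeas : ∀ k, Measurable (v k))
    (hindep : ProbabilityTheory.iIndepFun v ℙ)
    (hdist : ∀ k, Measure.map (v k) ℙ = betaMeasure 1 α) :
    ∀ᵐ ω ∂ℙ,
      HasSum (fun k => v k ω * ∏ j ∈ Finset.range k, (1 - v j ω)) 1 ∧
        Tendsto (fun K => ∏ j ∈ Finset.range K, (1 - v j ω)) atTop (nhds 0) := by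
  have : IsProbabilityMeasure (betaMeasure 1 α) :=
    hdist 0 ▸ Measure.isProbabilityMeasure_map (hmeas 0).aemeasurable
  have hofReal_meas : Measurable fun x : ℝ => ENNReal.ofReal (1 - x) := by fun_prop
  have hv : ∀ᵐ ω ∂ℙ, ∀ k, v k ω ∈ Set.Ioc 0 1 := ae_all_iff.2 fun k =>
    ae_of_ae_map (hmeas k).aemeasurable (hdist k ▸ ae_betaMeasure_mem_Ioc 1 α)
  have hprod := ae_tendsto_prod_range_zero_of_iIndepFun (fun k => hofReal_meas.comp (hmeas k))
    (hindep.comp _ fun _ => hofReal_meas)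
    (lintegral_ofReal_one_sub_lt_one ((ae_betaMeasure_mem_Ioc 1 α).mono fun _ hx => hx.1))
    fun k => by rw [← hdist k, lintegral_map hofReal_meas (hmeas k)]; rfl
  filter_upwards [hv, hprod] with ω hvω hprodω
  have hIcc (k : ℕ) : v k ω ∈ Set.Icc 0 1 := Set.Ioc_subset_Icc_self (hvω k)
  have htend : Tendsto (fun K => ∏ j ∈ range K, (1 - v j ω)) atTop (𝓝 0) :=
    tendsto_prod_range_one_sub_of_ofReal (fun k => (hIcc k).2) hprodω
  exact ⟨hasSum_stickBreaking hIcc htend, htend⟩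

/-- Stick-breaking weights sum to one almost surely: if `(v_k)` is an
i.i.d. sequence of `Beta(1, α)` random variables (`α > 0`) and
`π_k = v_k ∏_{j<k} (1 − v_j)`, then almost surely `∑_k π_k = 1`; equivalently,
`∏_{j<K} (1 − v_j) → 0` almost surely as `K → ∞`. -/
theorem stmt_12 (α : ℝ) (hα : 0 < α)
    (Ω : Type*) [MeasurableSpace Ω] (ℙ : Measure Ω) [IsProbabilityMeasure ℙ]
    (v : ℕ → Ω → ℝ) (hmeas : ∀ k, Measurable (v k))
    (hindep : ProbabilityTheory.iIndepFun v ℙ)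
    (hdist : ∀ k, Measure.map (v k) ℙ = betaMeasure 1 α) :
    ∀ᵐ ω ∂ℙ,
      HasSum (fun k => v k ω * ∏ j ∈ Finset.range k, (1 - v j ω)) 1 ∧
        Tendsto (fun K => ∏ j ∈ Finset.range K, (1 - v j ω)) atTop (nhds 0) :=
  stmt_12_general α Ω ℙ v hmeas hindep hdist
end

section
/- Logarithmic moment of the Beta distribution: for a, b > 0, ∫_{0}^{1} log(x) dBeta(a, b)(x) = ψ(a) − ψ(a + b), where ψ denotes the digamma function, i.e., ψ(t) is the derivative at t of the function t ↦ log Γ(t) (Γ being the real Gamma function). -/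
/-! Differentiating `B(s, b) = ∫₀¹ x^(s-1) (1-x)^(b-1) dx` under the integral sign gives
`∂ₛ B(s, b) = ∫₀¹ log x · x^(s-1) (1-x)^(b-1) dx`, so the logarithmic moment of `Beta(a, b)`
is `∂ₛ log B(s, b)` at `s = a`. Since `B(s, b) = Γ(s) Γ(b) / Γ(s + b)`, this derivative is
`ψ(a) - ψ(a + b)`. -/

open MeasureTheory

noncomputable def digamma (t : ℝ) : ℝ :=
  deriv (fun s => Real.log (Real.Gamma s)) t

open Real Set intervalIntegral

lemma ofReal_rpow_mul_one_sub_rpow {x : ℝ} (hx₀ : 0 ≤ x) (hx₁ : x ≤ 1) (c d : ℝ) :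
    ((x ^ (c - 1) * (1 - x) ^ (d - 1) : ℝ) : ℂ)
      = (x : ℂ) ^ ((c : ℂ) - 1) * (1 - (x : ℂ)) ^ ((d : ℂ) - 1) := by
  push_cast [Complex.ofReal_cpow hx₀, Complex.ofReal_cpow (sub_nonneg.2 hx₁)]
  rfl

lemma intervalIntegrable_rpow_mul_one_sub_rpow {c d : ℝ} (hc : 0 < c) (hd : 0 < d) :
    IntervalIntegrable (fun x : ℝ => x ^ (c - 1) * (1 - x) ^ (d - 1)) volume 0 1 := by
  refine (Complex.betaIntegral_convergent (u := c) (v := d) (by simpa) (by simpa)).norm.congr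
    fun x hx => ?_
  rw [uIoc_of_le zero_le_one] at hx
  rw [← ofReal_rpow_mul_one_sub_rpow hx.1.le hx.2, Complex.norm_real, Real.norm_of_nonneg]
  exact mul_nonneg (rpow_nonneg hx.1.le _) (rpow_nonneg (sub_nonneg.2 hx.2) _)

lemma integral_rpow_mul_one_sub_rpow {c d : ℝ} (hc : 0 < c) (hd : 0 < d) :
    ∫ x in (0 : ℝ)..1, x ^ (c - 1) * (1 - x) ^ (d - 1) = Gamma c * Gamma d / Gamma (c + d) := by
  have h := Complex.betaIntegral_eq_Gamma_mul_div c d (by simpa) (by simpa)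
  have hcongr : EqOn (fun x : ℝ => ((x ^ (c - 1) * (1 - x) ^ (d - 1) : ℝ) : ℂ))
      (fun x : ℝ => (x : ℂ) ^ ((c : ℂ) - 1) * (1 - (x : ℂ)) ^ ((d : ℂ) - 1)) (uIcc 0 1) :=
    fun x hx => by
      rw [uIcc_of_le zero_le_one] at hx
      exact ofReal_rpow_mul_one_sub_rpow hx.1 hx.2 c d
  rw [Complex.betaIntegral, ← integral_congr hcongr, integral_ofReal, ← Complex.ofReal_add,
    Complex.Gamma_ofReal, Complex.Gamma_ofReal, Complex.Gamma_ofReal] at h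
  exact_mod_cast h

lemma abs_log_mul_rpow_le {t r s ε : ℝ} (ht₀ : 0 < t) (ht₁ : t ≤ 1) (hε : 0 < ε)
    (hrs : r + ε ≤ s) : |log t| * t ^ s ≤ ε⁻¹ * t ^ r := by
  have hlog : |log t| * t ^ ε ≤ 1 / ε := by
    simpa [abs_mul, abs_of_pos (rpow_pos_of_pos ht₀ ε)] using
      (abs_log_mul_self_rpow_lt t ε ht₀ ht₁ hε).le
  calc |log t| * t ^ s ≤ |log t| * (t ^ ε * t ^ r) := by
        rw [← rpow_add ht₀, add_comm]
        exact mul_le_mul_of_nonneg_left (rpow_le_rpow_of_exponent_ge ht₀ ht₁ hrs) (abs_nonneg _)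
    _ = (|log t| * t ^ ε) * t ^ r := by ring
    _ ≤ ε⁻¹ * t ^ r := by simpa using mul_le_mul_of_nonneg_right hlog (rpow_nonneg ht₀.le r)

lemma hasDerivAt_log_Gamma {s : ℝ} (hs : 0 < s) :
    HasDerivAt (fun t => log (Gamma t)) (digamma s) s :=
  ((differentiableAt_Gamma fun m => by linarith [(m.cast_nonneg : (0 : ℝ) ≤ m)]).log
    (Gamma_pos_of_pos hs).ne').hasDerivAt

lemma hasDerivAt_integral_rpow_mul_one_sub_rpow {a b : ℝ} (ha : 0 < a) (hb : 0 < b) :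
    HasDerivAt (fun s => ∫ x in (0 : ℝ)..1, x ^ (s - 1) * (1 - x) ^ (b - 1))
      (∫ x in (0 : ℝ)..1, log x * (x ^ (a - 1) * (1 - x) ^ (b - 1))) a := by
  -- For `|s - a| < a / 4`, `|log x| x^(s-1) ≤ (4 / a) x^(a/2 - 1)` on `(0, 1]`.
  refine (hasDerivAt_integral_of_dominated_loc_of_deriv_le
    (F' := fun s x => log x * (x ^ (s - 1) * (1 - x) ^ (b - 1)))
    (bound := fun x => (a / 4)⁻¹ * (x ^ (a / 2 - 1) * (1 - x) ^ (b - 1)))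
    (Metric.ball_mem_nhds a (by positivity : 0 < a / 4)) (.of_forall fun _ => by fun_prop)
    (intervalIntegrable_rpow_mul_one_sub_rpow ha hb)
    (by fun_prop) ?_
    ((intervalIntegrable_rpow_mul_one_sub_rpow (half_pos ha) hb).const_mul _) ?_).2
  · refine .of_forall fun t ht s hs => ?_
    rw [uIoc_of_le zero_le_one] at ht
    rw [Metric.mem_ball, Real.dist_eq, abs_lt] at hs
    have h1t : 0 ≤ (1 - t) ^ (b - 1) := rpow_nonneg (sub_nonneg.2 ht.2) _
    calc ‖log t * (t ^ (s - 1) * (1 - t) ^ (b - 1))‖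
        = |log t| * t ^ (s - 1) * (1 - t) ^ (b - 1) := by
          rw [Real.norm_eq_abs, abs_mul, abs_mul, abs_of_nonneg (rpow_nonneg ht.1.le _),
            abs_of_nonneg h1t, mul_assoc]
      _ ≤ (a / 4)⁻¹ * t ^ (a / 2 - 1) * (1 - t) ^ (b - 1) :=
          mul_le_mul_of_nonneg_right
            (abs_log_mul_rpow_le ht.1 ht.2 (by positivity) (by linarith)) h1t
      _ = (a / 4)⁻¹ * (t ^ (a / 2 - 1) * (1 - t) ^ (b - 1)) := mul_assoc _ _ _
  · refine .of_forall fun t ht s _ => ?_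
    rw [uIoc_of_le zero_le_one] at ht
    exact ((((hasDerivAt_id' s).sub_const 1).const_rpow ht.1).mul_const _).congr_deriv (by ring)

lemma integral_log_mul_rpow_mul_one_sub_rpow_div {a b : ℝ} (ha : 0 < a) (hb : 0 < b) :
    (∫ x in (0 : ℝ)..1, log x * (x ^ (a - 1) * (1 - x) ^ (b - 1)))
        / (∫ x in (0 : ℝ)..1, x ^ (a - 1) * (1 - x) ^ (b - 1))
      = digamma a - digamma (a + b) := by
  have hΓ {s : ℝ} (hs : 0 < s) : Gamma s ≠ 0 := (Gamma_pos_of_pos hs).ne'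
  have hI : ∫ x in (0 : ℝ)..1, x ^ (a - 1) * (1 - x) ^ (b - 1) ≠ 0 := by
    rw [integral_rpow_mul_one_sub_rpow ha hb]
    exact div_ne_zero (mul_ne_zero (hΓ ha) (hΓ hb)) (hΓ (add_pos ha hb))
  have hlogΓ := (((hasDerivAt_log_Gamma ha).add_const (log (Gamma b))).sub
    ((hasDerivAt_log_Gamma (add_pos ha hb)).comp_add_const a b))
  refine ((hasDerivAt_integral_rpow_mul_one_sub_rpow ha hb).log hI).unique
    (hlogΓ.congr_of_eventuallyEq ?_)
  filter_upwards [eventually_gt_nhds ha] with s hs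
  rw [integral_rpow_mul_one_sub_rpow hs hb, log_div (mul_ne_zero (hΓ hs) (hΓ hb))
    (hΓ (add_pos hs hb)), log_mul (hΓ hs) (hΓ hb)]
  rfl

lemma integral_betaMeasure {a b : ℝ} (ha : 0 < a) (hb : 0 < b) (f : ℝ → ℝ) :
    ∫ x, f x ∂betaMeasure a b
      = (∫ x in (0 : ℝ)..1, f x * (x ^ (a - 1) * (1 - x) ^ (b - 1)))
          / (Gamma a * Gamma b / Gamma (a + b)) := by
  have hB : 0 < Gamma a * Gamma b / Gamma (a + b) := by
    have := Gamma_pos_of_pos ha; have := Gamma_pos_of_pos hb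
    have := Gamma_pos_of_pos (add_pos ha hb); positivity
  rw [betaMeasure, integral_withDensity_eq_integral_toReal_smul ?_
    (.of_forall fun _ => ENNReal.ofReal_lt_top), ← intervalIntegral.integral_div,
    integral_of_le zero_le_one, ← integral_Icc_eq_integral_Ioc,
    ← MeasureTheory.integral_indicator measurableSet_Icc]
  congr 1 with x
  by_cases hx : x ∈ Icc (0 : ℝ) 1
  · have : 0 ≤ x ^ (a - 1) * (1 - x) ^ (b - 1) :=
      mul_nonneg (rpow_nonneg hx.1 _) (rpow_nonneg (sub_nonneg.2 hx.2) _)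
    simp only [hx, if_true, indicator_of_mem, ENNReal.toReal_ofReal (div_nonneg this hB.le),
      smul_eq_mul]
    ring
  · simp [hx]
  · exact (Measurable.ite measurableSet_Icc (by fun_prop) measurable_const).ennreal_ofReal

/-- Logarithmic moment of the Beta distribution: for `a, b > 0`,
`∫ log x dBeta(a,b)(x) = ψ(a) − ψ(a+b)`. -/
theorem stmt_14 (a b : ℝ) (ha : 0 < a) (hb : 0 < b) :
    ∫ x, Real.log x ∂(betaMeasure a b) = digamma a - digamma (a + b) := by
  rw [integral_betaMeasure ha hb, ← integral_rpow_mul_one_sub_rpow ha hb]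
  exact integral_log_mul_rpow_mul_one_sub_rpow_div ha hb
end
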